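/- arXiv:1005.0079 — 5 statements merged into one kernel-verified Lean document; each statement's English description precedes it below -/
import Mathlib

section
/- If every word s over a set Σ₀ of functions on a finite set V satisfies that the composition ⟨s⟩ maps V to a set of size at least 2 (i.e., Σ₀ is non-synchronizing), and V₀ = ⟨s⟩V attains the minimal possible cardinality m̂ = min over words s of #(⟨s⟩V), then V₀ is a deadlock: no two distinct points of V₀ can be mapped to the same point by any composition of maps from Σ₀. -/
/-- Composition of a word `s = [σ_p, ..., σ_1]` of maps: `⟨s⟩ = σ_p ∘ ⋯ ∘ σ_1`. -/
def wcomp {V : Type*} (s : List (V → V)) : V → V := s.foldr (· ∘ ·) id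

lemma wcomp_append {V : Type*} (s t : List (V → V)) :
    wcomp (s ++ t) = wcomp s ∘ wcomp t := by
  simp [wcomp, List.foldr_append]
  induction s with
  | nil => rfl
  | cons f s ih => simp [ih, Function.comp_assoc]

/-- If Sig0 is non-synchronizing and `V₀ = ⟨s₀⟩V` attains the minimal cardinality,
then `V₀` is a deadlock. -/
theorem stmt_0 {V : Type*} [Fintype V] (Sig0 : Set (V → V))
    (hns : ∀ s : List (V → V), (∀ f ∈ s, f ∈ Sig0) →
      2 ≤ (Set.range (wcomp s)).ncard)
    (s₀ : List (V → V)) (hs₀ : ∀ f ∈ s₀, f ∈ Sig0)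
    (hmin : ∀ s : List (V → V), (∀ f ∈ s, f ∈ Sig0) →
      (Set.range (wcomp s₀)).ncard ≤ (Set.range (wcomp s)).ncard) :
    ∀ s : List (V → V), (∀ f ∈ s, f ∈ Sig0) →
      Set.InjOn (wcomp s) (Set.range (wcomp s₀)) := by
  intro s hs
  classical
  have hmem : ∀ f ∈ s ++ s₀, f ∈ Sig0 := by
    intro f hf
    rcases List.mem_append.mp hf with h | h
    · exact hs f h
    · exact hs₀ f h
  have hrange : Set.range (wcomp (s ++ s₀)) = wcomp s '' Set.range (wcomp s₀) := by
    rw [wcomp_append, Set.range_comp]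
  have hfin : (Set.range (wcomp s₀)).Finite := Set.toFinite _
  have hle : (wcomp s '' Set.range (wcomp s₀)).ncard ≤ (Set.range (wcomp s₀)).ncard :=
    Set.ncard_image_le hfin
  have hge : (Set.range (wcomp s₀)).ncard ≤ (wcomp s '' Set.range (wcomp s₀)).ncard := by
    have := hmin (s ++ s₀) hmem
    rwa [hrange] at this
  exact Set.injOn_of_ncard_image_eq (le_antisymm hle hge) hfin
end

section
/- If V₀ ⊆ V is an F-clique for a set Σ₀ of functions on V, then for every word s over Σ₀, the image ⟨s⟩V₀ is again an F-clique and has the same cardinality as V₀. -/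
/-- `s` is a word over `Sig0`. -/
def IsWord {V : Type*} (Sig0 : Set (V → V)) (s : List (V → V)) : Prop := ∀ f ∈ s, f ∈ Sig0

/-- `V₀` is a deadlock: no word identifies two distinct points of `V₀`. -/
def IsDeadlock {V : Type*} (Sig0 : Set (V → V)) (V₀ : Set V) : Prop :=
  ∀ s : List (V → V), IsWord Sig0 s → Set.InjOn (wcomp s) V₀

/-- `V₀` is an F-clique: a deadlock of the form `⟨s⟩V`. -/
def IsFClique {V : Type*} (Sig0 : Set (V → V)) (V₀ : Set V) : Prop :=
  IsDeadlock Sig0 V₀ ∧ ∃ s : List (V → V), IsWord Sig0 s ∧ V₀ = Set.range (wcomp s)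

lemma isWord_append {V : Type*} {Sig0 : Set (V → V)} {s t : List (V → V)}
    (hs : IsWord Sig0 s) (ht : IsWord Sig0 t) : IsWord Sig0 (s ++ t) := by
  intro f hf
  rcases List.mem_append.mp hf with h | h
  · exact hs f h
  · exact ht f h

/-- If `V₀` is an F-clique, then for every word `s`, the image `⟨s⟩V₀` is again an
F-clique of the same cardinality. -/
theorem stmt_1 {V : Type*} [Fintype V] (Sig0 : Set (V → V)) (V₀ : Set V)
    (hF : IsFClique Sig0 V₀) :
    ∀ s : List (V → V), IsWord Sig0 s →
      IsFClique Sig0 (wcomp s '' V₀) ∧ (wcomp s '' V₀).ncard = V₀.ncard := by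
  intro s hs
  obtain ⟨hdl, u, hu, hV₀⟩ := hF
  refine ⟨⟨?_, s ++ u, isWord_append hs hu, ?_⟩, ?_⟩
  · intro t ht x hx y hy hxy
    obtain ⟨x', hx', rfl⟩ := hx
    obtain ⟨y', hy', rfl⟩ := hy
    have := hdl (t ++ s) (isWord_append ht hs) hx' hy'
      (by simpa [wcomp_append] using hxy)
    rw [this]
  · rw [hV₀, wcomp_append, Set.range_comp]
  · exact Set.ncard_image_of_injOn (hdl s hs)
end

section
/- Every F-clique for a set Σ₀ of functions on a finite set V has exactly m̂ elements, where m̂ is the minimum of #(⟨s⟩V) over all words s over Σ₀. -/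
/-- Every F-clique has exactly `m̂` elements, where `m̂` is the minimum of `#(⟨s⟩V)`
over all words `s` over `Sig0`. -/
theorem stmt_2 {V : Type*} [Fintype V] (Sig0 : Set (V → V)) (hne : Sig0.Nonempty)
    (hfin : Sig0.Finite) (V₀ : Set V) (hF : IsFClique Sig0 V₀) :
    V₀.ncard = sInf {n : ℕ | ∃ s : List (V → V), IsWord Sig0 s ∧ (Set.range (wcomp s)).ncard = n} := by
  obtain ⟨hdl, s, hs, hV₀⟩ := hF
  have hmem : V₀.ncard ∈ {n : ℕ | ∃ s : List (V → V), IsWord Sig0 s ∧ (Set.range (wcomp s)).ncard = n} :=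
    ⟨s, hs, by rw [hV₀]⟩
  apply le_antisymm _ (Nat.sInf_le hmem)
  apply le_csInf ⟨_, hmem⟩
  rintro n ⟨t, ht, rfl⟩
  have h1 : V₀.ncard = (wcomp t '' V₀).ncard := (Set.ncard_image_of_injOn (hdl t ht)).symm
  rw [h1]
  exact Set.ncard_le_ncard (Set.image_subset_range _ _) (Set.toFinite _)
end

section
/- Let B be an m × m stochastic matrix (nonnegative entries, each column summing to 1) such that some power B^r has all entries strictly positive. Then there exists a stochastic vector u with B u = u, such that B^n(y,x) → u(y) as n → ∞ for all x, y; moreover u is the unique stochastic vector fixed by B. -/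
open Filter Finset


lemma aux_pow_nonneg {m : ℕ} (B : Matrix (Fin m) (Fin m) ℝ)
    (hB0 : ∀ y x, 0 ≤ B y x) (n : ℕ) : ∀ y x, 0 ≤ (B ^ n) y x := by
  induction n with
  | zero =>
    intro y x
    simp only [pow_zero, Matrix.one_apply]
    split <;> norm_num
  | succ n ih =>
    intro y x
    rw [pow_succ, Matrix.mul_apply]
    exact Finset.sum_nonneg fun z _ => mul_nonneg (ih y z) (hB0 z x)

lemma aux_col_sum {m : ℕ} (B : Matrix (Fin m) (Fin m) ℝ)
    (hB1 : ∀ x, ∑ y, B y x = 1) (n : ℕ) : ∀ x, ∑ y, (B ^ n) y x = 1 := by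
  induction n with
  | zero => intro x; simp [Matrix.one_apply]
  | succ n ih =>
    intro x
    simp only [pow_succ, Matrix.mul_apply]
    rw [Finset.sum_comm]
    calc ∑ z, ∑ y, (B ^ n) y z * B z x
        = ∑ z, (∑ y, (B ^ n) y z) * B z x := by simp [Finset.sum_mul]
      _ = ∑ z, B z x := by simp [ih]
      _ = 1 := hB1 x

lemma aux_contract {m : ℕ} (he : (Finset.univ : Finset (Fin m)).Nonempty)
    (a w w' : Fin m → ℝ) (δ : ℝ)
    (hw : ∀ z, δ ≤ w z) (hw' : ∀ z, δ ≤ w' z)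
    (hws : ∑ z, w z = 1) (hw's : ∑ z, w' z = 1) :
    (∑ z, w z * a z) - ∑ z, w' z * a z ≤
      (1 - m * δ) * (univ.sup' he a - univ.inf' he a) := by
  have hsplit : ∀ (v : Fin m → ℝ),
      ∑ z, v z * a z = (∑ z, (v z - δ) * a z) + δ * ∑ z, a z := by
    intro v
    rw [Finset.mul_sum, ← Finset.sum_add_distrib]
    congr 1; funext z; ring
  have hsum : ∀ (v : Fin m → ℝ), (∑ z, v z = 1) →
      ∑ z, (v z - δ) = 1 - m * δ := by
    intro v hv
    rw [Finset.sum_sub_distrib, hv, Finset.sum_const, Finset.card_univ,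
      Fintype.card_fin, nsmul_eq_mul]
  have hub : ∑ z, (w z - δ) * a z ≤ (1 - m * δ) * univ.sup' he a := by
    rw [← hsum w hws, Finset.sum_mul]
    exact Finset.sum_le_sum fun z _ =>
      mul_le_mul_of_nonneg_left (Finset.le_sup' a (mem_univ z)) (sub_nonneg.2 (hw z))
  have hlb : (1 - m * δ) * univ.inf' he a ≤ ∑ z, (w' z - δ) * a z := by
    rw [← hsum w' hw's, Finset.sum_mul]
    exact Finset.sum_le_sum fun z _ =>
      mul_le_mul_of_nonneg_left (Finset.inf'_le a (mem_univ z)) (sub_nonneg.2 (hw' z))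
  rw [hsplit w, hsplit w']
  have := sub_le_sub hub hlb
  linarith [this]

/-- Perron--Frobenius: a stochastic matrix (columns summing to 1) with some power
having all entries positive has a unique stochastic fixed vector `u`, and
`B^n(y,x) → u(y)` for all `x, y`. -/
theorem stmt_6 {m : ℕ} (hm : 0 < m) (B : Matrix (Fin m) (Fin m) ℝ)
    (hB0 : ∀ y x, 0 ≤ B y x) (hB1 : ∀ x, ∑ y, B y x = 1)
    (r : ℕ) (hr : 0 < r) (hpos : ∀ y x, 0 < (B ^ r) y x) :
    ∃ u : Fin m → ℝ, (∀ y, 0 ≤ u y) ∧ (∑ y, u y = 1) ∧ B.mulVec u = u ∧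
      (∀ x y, Tendsto (fun n => (B ^ n) y x) atTop (nhds (u y))) ∧
      (∀ u' : Fin m → ℝ, (∀ y, 0 ≤ u' y) → (∑ y, u' y = 1) → B.mulVec u' = u' → u' = u) := by
  haveI : NeZero m := ⟨hm.ne'⟩
  have he : (Finset.univ : Finset (Fin m)).Nonempty := Finset.univ_nonempty
  have hN0 := aux_pow_nonneg B hB0
  have hCS := aux_col_sum B hB1
  set Mx : ℕ → Fin m → ℝ := fun n y => univ.sup' he (fun x => (B ^ n) y x) with hMx
  set mi : ℕ → Fin m → ℝ := fun n y => univ.inf' he (fun x => (B ^ n) y x) with hmi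
  have hle : ∀ n y x, mi n y ≤ (B ^ n) y x :=
    fun n y x => Finset.inf'_le _ (mem_univ x)
  have hge : ∀ n y x, (B ^ n) y x ≤ Mx n y :=
    fun n y x => Finset.le_sup' _ (mem_univ x)
  -- gap
  set gap : ℕ → Fin m → ℝ := fun n y => Mx n y - mi n y with hgap
  have hgap0 : ∀ n y, 0 ≤ gap n y := fun n y =>
    sub_nonneg.2 ((hle n y ⟨0, hm⟩).trans (hge n y ⟨0, hm⟩))
  -- step estimate: for k, entries of B^(n+k) as convex combos of row of B^n
  have hstep : ∀ n k y x, (B ^ (n + k)) y x = ∑ z, (B ^ n) y z * (B ^ k) z x := by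
    intro n k y x
    rw [pow_add, Matrix.mul_apply]
  -- Mx antitone in n
  have hMxdec : ∀ y, Antitone (fun n => Mx n y) := by
    intro y
    apply antitone_nat_of_succ_le
    intro n
    apply Finset.sup'_le
    intro x _
    have : (B ^ (n + 1)) y x = ∑ z, (B ^ n) y z * B z x := by
      simpa using hstep n 1 y x
    rw [this]
    calc ∑ z, (B ^ n) y z * B z x ≤ ∑ z, Mx n y * B z x :=
          Finset.sum_le_sum fun z _ =>
            mul_le_mul_of_nonneg_right (hge n y z) (hB0 z x)
      _ = Mx n y := by rw [← Finset.mul_sum, hB1 x, mul_one]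
  have hmiinc : ∀ y, Monotone (fun n => mi n y) := by
    intro y
    apply monotone_nat_of_le_succ
    intro n
    apply Finset.le_inf'
    intro x _
    have : (B ^ (n + 1)) y x = ∑ z, (B ^ n) y z * B z x := by
      simpa using hstep n 1 y x
    rw [this]
    calc mi n y = ∑ z, mi n y * B z x := by rw [← Finset.mul_sum, hB1 x, mul_one]
      _ ≤ ∑ z, (B ^ n) y z * B z x :=
          Finset.sum_le_sum fun z _ =>
            mul_le_mul_of_nonneg_right (hle n y z) (hB0 z x)
  have hgapdec : ∀ y, Antitone (fun n => gap n y) := fun y _ _ hnk =>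
    sub_le_sub (hMxdec y hnk) (hmiinc y hnk)
  -- δ
  set δ : ℝ := univ.inf' he (fun z => univ.inf' he (fun x => (B ^ r) z x)) with hδ
  have hδpos : 0 < δ := by
    rw [hδ, Finset.lt_inf'_iff]
    intro z _
    rw [Finset.lt_inf'_iff]
    intro x _
    exact hpos z x
  have hδle : ∀ z x, δ ≤ (B ^ r) z x := by
    intro z x
    exact le_trans (Finset.inf'_le _ (mem_univ z)) (Finset.inf'_le _ (mem_univ x))
  set c : ℝ := 1 - m * δ with hc
  have hc0 : 0 ≤ c := by
    have : (m : ℝ) * δ = ∑ _z : Fin m, δ := by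
      rw [Finset.sum_const, Finset.card_univ, Fintype.card_fin, nsmul_eq_mul]
    have h2 : (m : ℝ) * δ ≤ ∑ z, (B ^ r) z (⟨0, hm⟩ : Fin m) := by
      rw [this]; exact Finset.sum_le_sum fun z _ => hδle z _
    rw [hCS r] at h2
    linarith
  have hc1 : c < 1 := by
    have : 0 < (m : ℝ) * δ :=
      mul_pos (by exact_mod_cast hm) hδpos
    simp only [hc]; linarith
  -- contraction
  have hcontr : ∀ n y, gap (n + r) y ≤ c * gap n y := by
    intro n y
    obtain ⟨x₁, -, hx₁⟩ := Finset.exists_mem_eq_sup' he (fun x => (B ^ (n + r)) y x)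
    obtain ⟨x₂, -, hx₂⟩ := Finset.exists_mem_eq_inf' he (fun x => (B ^ (n + r)) y x)
    have : gap (n + r) y = (B ^ (n + r)) y x₁ - (B ^ (n + r)) y x₂ := by
      simp only [hgap, hMx, hmi]; rw [hx₁, hx₂]
    rw [this, hstep n r y x₁, hstep n r y x₂]
    have := aux_contract he (fun z => (B ^ n) y z)
      (fun z => (B ^ r) z x₁) (fun z => (B ^ r) z x₂) δ
      (fun z => hδle z x₁) (fun z => hδle z x₂) (hCS r x₁) (hCS r x₂)
    simpa only [mul_comm] using this
  -- gap tends to 0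
  have hgapbdd : ∀ y, BddBelow (Set.range fun n => gap n y) :=
    fun y => ⟨0, by rintro t ⟨n, rfl⟩; exact hgap0 n y⟩
  have hgaplim : ∀ y, Tendsto (fun n => gap n y) atTop (nhds 0) := by
    intro y
    have hlim : Tendsto (fun n => gap n y) atTop (nhds (⨅ n, gap n y)) :=
      tendsto_atTop_ciInf (hgapdec y) (hgapbdd y)
    have hkr : Tendsto (fun k : ℕ => k * r) atTop atTop :=
      Tendsto.atTop_mul_const' hr tendsto_id
    have hsub : Tendsto (fun k => gap (k * r) y) atTop (nhds (⨅ n, gap n y)) :=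
      hlim.comp hkr
    have hbound : ∀ k, gap (k * r) y ≤ c ^ k * gap 0 y := by
      intro k
      induction k with
      | zero => simp
      | succ k ih =>
        have : (k + 1) * r = k * r + r := by ring
        rw [this]
        calc gap (k * r + r) y ≤ c * gap (k * r) y := hcontr (k * r) y
          _ ≤ c * (c ^ k * gap 0 y) := by
              exact mul_le_mul_of_nonneg_left ih hc0
          _ = c ^ (k + 1) * gap 0 y := by ring
    have hpow : Tendsto (fun k : ℕ => c ^ k * gap 0 y) atTop (nhds 0) := by
      have := tendsto_pow_atTop_nhds_zero_of_lt_one hc0 hc1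
      simpa using this.mul_const (gap 0 y)
    have hsub0 : Tendsto (fun k => gap (k * r) y) atTop (nhds 0) :=
      tendsto_of_tendsto_of_tendsto_of_le_of_le tendsto_const_nhds hpow
        (fun k => hgap0 (k * r) y) hbound
    have : (⨅ n, gap n y) = 0 := tendsto_nhds_unique hsub hsub0
    rwa [this] at hlim
  -- define u
  set u : Fin m → ℝ := fun y => ⨅ n, Mx n y with hu
  have hMxbdd : ∀ y, BddBelow (Set.range fun n => Mx n y) := by
    intro y
    refine ⟨0, ?_⟩
    rintro t ⟨n, rfl⟩
    exact le_trans (hN0 n y ⟨0, hm⟩) (hge n y ⟨0, hm⟩)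
  have hMxlim : ∀ y, Tendsto (fun n => Mx n y) atTop (nhds (u y)) :=
    fun y => tendsto_atTop_ciInf (hMxdec y) (hMxbdd y)
  have hmilim : ∀ y, Tendsto (fun n => mi n y) atTop (nhds (u y)) := by
    intro y
    have : (fun n => mi n y) = fun n => Mx n y - gap n y := by
      funext n; simp [hgap]
    rw [this]
    simpa using (hMxlim y).sub (hgaplim y)
  have hconv : ∀ x y, Tendsto (fun n => (B ^ n) y x) atTop (nhds (u y)) := by
    intro x y
    exact tendsto_of_tendsto_of_tendsto_of_le_of_le (hmilim y) (hMxlim y)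
      (fun n => hle n y x) (fun n => hge n y x)
  refine ⟨u, ?_, ?_, ?_, hconv, ?_⟩
  · -- nonneg
    intro y
    exact ge_of_tendsto' (hconv ⟨0, hm⟩ y) (fun n => hN0 n y ⟨0, hm⟩)
  · -- sum = 1
    have h1 : Tendsto (fun n => ∑ y, (B ^ n) y (⟨0, hm⟩ : Fin m)) atTop
        (nhds (∑ y, u y)) :=
      tendsto_finset_sum _ (fun y _ => hconv ⟨0, hm⟩ y)
    have h2 : (fun n => ∑ y, (B ^ n) y (⟨0, hm⟩ : Fin m)) = fun _ => 1 := by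
      funext n; exact hCS n _
    rw [h2] at h1
    exact tendsto_nhds_unique h1 tendsto_const_nhds
  · -- fixed point
    funext y
    have h1 : Tendsto (fun n => (B ^ (n + 1)) y (⟨0, hm⟩ : Fin m)) atTop (nhds (u y)) :=
      (hconv ⟨0, hm⟩ y).comp (tendsto_add_atTop_nat 1)
    have h2 : (fun n => (B ^ (n + 1)) y (⟨0, hm⟩ : Fin m)) =
        fun n => ∑ z, B y z * (B ^ n) z (⟨0, hm⟩ : Fin m) := by
      funext n
      rw [pow_succ', Matrix.mul_apply]
    rw [h2] at h1
    have h3 : Tendsto (fun n => ∑ z, B y z * (B ^ n) z (⟨0, hm⟩ : Fin m)) atTop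
        (nhds (∑ z, B y z * u z)) :=
      tendsto_finset_sum _ (fun z _ => (hconv ⟨0, hm⟩ z).const_mul (B y z))
    have := tendsto_nhds_unique h3 h1
    simpa [Matrix.mulVec, dotProduct] using this
  · -- uniqueness
    intro u' hu'0 hu'1 hu'fix
    have hfixn : ∀ n, (B ^ n).mulVec u' = u' := by
      intro n
      induction n with
      | zero => simp
      | succ n ih =>
        rw [pow_succ, ← Matrix.mulVec_mulVec, hu'fix, ih]
    funext y
    have h1 : Tendsto (fun n => ((B ^ n).mulVec u') y) atTop (nhds (u y * 1)) := by
      have : ∀ n, ((B ^ n).mulVec u') y = ∑ x, (B ^ n) y x * u' x := by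
        intro n; rfl
      simp only [this]
      have h3 : Tendsto (fun n => ∑ x, (B ^ n) y x * u' x) atTop
          (nhds (∑ x, u y * u' x)) :=
        tendsto_finset_sum _ (fun x _ => (hconv x y).mul_const (u' x))
      rw [← Finset.mul_sum, hu'1] at h3
      exact h3
    rw [mul_one] at h1
    have h2 : (fun n => ((B ^ n).mulVec u') y) = fun _ => u' y := by
      funext n; rw [hfixn n]
    rw [h2] at h1
    exact tendsto_nhds_unique tendsto_const_nhds h1
end

section
/- Let μ be a probability measure on the monoid Σ of functions on a finite set V such that the induced stochastic matrix B(y,x) = μ({σ : σ(x) = y}) has some power with all entries positive. Then there exists a unique probability measure λ on V satisfying the convolution equation μ * λ = λ, and moreover μ^{*n}({σ : σ(x) = y}) → λ(y) for all x, y ∈ V. -/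
open Filter

/-- Convolution of two probability weights on the monoid of functions `V → V`. -/
noncomputable def convF {V : Type*} [Fintype V] [DecidableEq V] (μ ν : (V → V) → ℝ) :
    (V → V) → ℝ :=
  fun τ => ∑ σ₁ : V → V, ∑ σ₂ : V → V, if σ₁ ∘ σ₂ = τ then μ σ₁ * ν σ₂ else 0

/-- `n`-fold convolution power of `μ` (with `μ^{*0} = δ_id`). -/
noncomputable def convPow {V : Type*} [Fintype V] [DecidableEq V] (μ : (V → V) → ℝ) :
    ℕ → ((V → V) → ℝ)
  | 0 => fun τ => if τ = id then 1 else 0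
  | n + 1 => convF (convPow μ n) μ

/-- Convolution `μ * λ`: the law of `σ x` for `σ ∼ μ`, `x ∼ λ` independent. -/
noncomputable def convV {V : Type*} [Fintype V] [DecidableEq V] (μ : (V → V) → ℝ)
    (lam : V → ℝ) : V → ℝ :=
  fun y => ∑ σ : V → V, ∑ x : V, if σ x = y then μ σ * lam x else 0

section AuxStmt7
set_option linter.unusedSectionVars false
variable {V : Type*} [Fintype V] [DecidableEq V]

lemma stmt7_colStoch_mulVec_sum (M : Matrix V V ℝ) (hcs : ∀ x, ∑ y, M y x = 1) (v : V → ℝ) :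
    ∑ y, M.mulVec v y = ∑ x, v x := by
  simp only [Matrix.mulVec, dotProduct]
  rw [Finset.sum_comm]
  simp [← Finset.sum_mul, hcs]

lemma stmt7_colStoch_mulVec_abs (M : Matrix V V ℝ) (hnn : ∀ y x, 0 ≤ M y x)
    (hcs : ∀ x, ∑ y, M y x = 1) (v : V → ℝ) :
    ∑ y, |M.mulVec v y| ≤ ∑ x, |v x| := by
  have h1 : ∀ y, |M.mulVec v y| ≤ ∑ x, M y x * |v x| := by
    intro y
    refine (Finset.abs_sum_le_sum_abs _ _).trans_eq ?_
    refine Finset.sum_congr rfl fun x _ => ?_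
    rw [abs_mul, abs_of_nonneg (hnn y x)]
  refine (Finset.sum_le_sum fun y _ => h1 y).trans_eq ?_
  rw [Finset.sum_comm]
  simp [← Finset.sum_mul, hcs]

lemma stmt7_contract_step (A : Matrix V V ℝ) (δ : ℝ) (hδ : ∀ y x, δ ≤ A y x)
    (hcs : ∀ x, ∑ y, A y x = 1) (v : V → ℝ) (hv : ∑ x, v x = 0) :
    ∑ y, |A.mulVec v y| ≤ (1 - Fintype.card V * δ) * ∑ x, |v x| := by
  have h1 : ∀ y, A.mulVec v y = ∑ x, (A y x - δ) * v x := by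
    intro y
    simp only [Matrix.mulVec, dotProduct, sub_mul, Finset.sum_sub_distrib,
      ← Finset.mul_sum, hv, mul_zero, sub_zero]
  have h2 : ∀ y, |A.mulVec v y| ≤ ∑ x, (A y x - δ) * |v x| := by
    intro y
    rw [h1 y]
    refine (Finset.abs_sum_le_sum_abs _ _).trans_eq ?_
    refine Finset.sum_congr rfl fun x _ => ?_
    rw [abs_mul, abs_of_nonneg (sub_nonneg.2 (hδ y x))]
  refine (Finset.sum_le_sum fun y _ => h2 y).trans_eq ?_
  rw [Finset.sum_comm, Finset.mul_sum]
  refine Finset.sum_congr rfl fun x _ => ?_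
  rw [← Finset.sum_mul]
  congr 1
  simp [Finset.sum_sub_distrib, hcs, mul_comm]

lemma stmt7_pow_nonneg (B : Matrix V V ℝ) (hnn : ∀ y x, 0 ≤ B y x) :
    ∀ n y x, 0 ≤ (B ^ n) y x := by
  intro n
  induction n with
  | zero => intro y x; simp only [pow_zero, Matrix.one_apply]; positivity
  | succ n ih =>
    intro y x
    rw [pow_succ, Matrix.mul_apply]
    exact Finset.sum_nonneg fun z _ => mul_nonneg (ih y z) (hnn z x)

lemma stmt7_pow_colsum (B : Matrix V V ℝ) (hcs : ∀ x, ∑ y, B y x = 1) :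
    ∀ n x, ∑ y, (B ^ n) y x = 1 := by
  intro n
  induction n with
  | zero => intro x; simp [Matrix.one_apply]
  | succ n ih =>
    intro x
    simp only [pow_succ, Matrix.mul_apply]
    rw [Finset.sum_comm]
    simp only [← Finset.sum_mul, ih]
    simpa using hcs x

lemma stmt7_key_decay (B : Matrix V V ℝ) (hnn : ∀ y x, 0 ≤ B y x) (hcs : ∀ x, ∑ y, B y x = 1)
    [Nonempty V] (r : ℕ) (hr : 0 < r) (δ : ℝ) (hδ : ∀ y x, δ ≤ (B ^ r) y x) :
    ∀ n (v : V → ℝ), (∑ x, v x = 0) →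
      ∑ y, |(B ^ n).mulVec v y| ≤ (1 - Fintype.card V * δ) ^ (n / r) * ∑ x, |v x| := by
  intro n
  induction n using Nat.strong_induction_on with
  | _ n ih =>
    intro v hv
    by_cases hn : n < r
    · rw [Nat.div_eq_of_lt hn, pow_zero, one_mul]
      exact stmt7_colStoch_mulVec_abs _ (stmt7_pow_nonneg B hnn n) (stmt7_pow_colsum B hcs n) v
    · push_neg at hn
      have hsplit : B ^ n = B ^ r * B ^ (n - r) := by
        rw [← pow_add]; congr 1; omega
      have hw : ∑ x, (B ^ (n - r)).mulVec v x = 0 := by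
        rw [stmt7_colStoch_mulVec_sum _ (stmt7_pow_colsum B hcs (n - r)), hv]
      have h1 : ∑ y, |(B ^ n).mulVec v y|
          ≤ (1 - Fintype.card V * δ) * ∑ x, |(B ^ (n - r)).mulVec v x| := by
        rw [hsplit, ← Matrix.mulVec_mulVec]
        exact stmt7_contract_step _ δ hδ (stmt7_pow_colsum B hcs r) _ hw
      have h2 := ih (n - r) (by omega) v hv
      have hK0 : 0 ≤ 1 - (Fintype.card V : ℝ) * δ := by
        have hx : (Fintype.card V : ℝ) * δ ≤ 1 := by
          obtain ⟨x⟩ := ‹Nonempty V›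
          calc (Fintype.card V : ℝ) * δ = ∑ _y : V, δ := by
                simp [Finset.sum_const, nsmul_eq_mul]
            _ ≤ ∑ y, (B ^ r) y x := Finset.sum_le_sum fun y _ => hδ y x
            _ = 1 := stmt7_pow_colsum B hcs r x
        linarith
      calc ∑ y, |(B ^ n).mulVec v y|
          ≤ (1 - Fintype.card V * δ) * ∑ x, |(B ^ (n - r)).mulVec v x| := h1
        _ ≤ (1 - Fintype.card V * δ) * ((1 - Fintype.card V * δ) ^ ((n - r) / r) * ∑ x, |v x|) :=
            mul_le_mul_of_nonneg_left h2 hK0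
        _ = (1 - Fintype.card V * δ) ^ (n / r) * ∑ x, |v x| := by
            have h3 : (n - r) / r + 1 = n / r := by
              conv_rhs => rw [← Nat.sub_add_cancel hn]
              rw [Nat.add_div_right _ hr]
            rw [← mul_assoc, ← pow_succ', h3]

lemma stmt7_convV_eq_mulVec (μ : (V → V) → ℝ) (B : Matrix V V ℝ)
    (hB : ∀ y x, B y x = ∑ σ : V → V, if σ x = y then μ σ else 0) (lam : V → ℝ) (y : V) :
    convV μ lam y = B.mulVec lam y := by
  simp only [convV, Matrix.mulVec, dotProduct, hB, Finset.sum_mul, ite_mul, zero_mul]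
  rw [Finset.sum_comm]

lemma stmt7_convPow_eq_pow (μ : (V → V) → ℝ) (B : Matrix V V ℝ)
    (hB : ∀ y x, B y x = ∑ σ : V → V, if σ x = y then μ σ else 0) :
    ∀ (n : ℕ) (x y : V), (∑ σ : V → V, if σ x = y then convPow μ n σ else 0) = (B ^ n) y x := by
  intro n
  induction n with
  | zero =>
    intro x y
    simp only [convPow, pow_zero, Matrix.one_apply]
    have h : ∀ σ : V → V, (if σ x = y then (if σ = id then (1:ℝ) else 0) else 0)
        = (if σ = id then (if σ x = y then (1:ℝ) else 0) else 0) := by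
      intro σ; by_cases h1 : σ x = y <;> by_cases h2 : σ = id <;> simp [h1, h2]
    rw [Finset.sum_congr rfl fun σ _ => h σ, Finset.sum_ite_eq']
    simp [eq_comm]
  | succ n ih =>
    intro x y
    simp only [convPow, convF, pow_succ, Matrix.mul_apply]
    calc (∑ τ : V → V, if τ x = y then ∑ σ₁ : V → V, ∑ σ₂ : V → V,
            (if σ₁ ∘ σ₂ = τ then convPow μ n σ₁ * μ σ₂ else 0) else 0)
        = ∑ τ : V → V, ∑ σ₁ : V → V, ∑ σ₂ : V → V,
            (if σ₁ ∘ σ₂ = τ then (if τ x = y then convPow μ n σ₁ * μ σ₂ else 0) else 0) := by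
          refine Finset.sum_congr rfl fun τ _ => ?_
          by_cases h : τ x = y <;> simp [h]
      _ = ∑ σ₁ : V → V, ∑ σ₂ : V → V, ∑ τ : V → V,
            (if σ₁ ∘ σ₂ = τ then (if τ x = y then convPow μ n σ₁ * μ σ₂ else 0) else 0) := by
          rw [Finset.sum_comm]
          exact Finset.sum_congr rfl fun σ₁ _ => Finset.sum_comm
      _ = ∑ σ₁ : V → V, ∑ σ₂ : V → V,
            (if σ₁ (σ₂ x) = y then convPow μ n σ₁ * μ σ₂ else 0) := by
          refine Finset.sum_congr rfl fun σ₁ _ => Finset.sum_congr rfl fun σ₂ _ => ?_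
          rw [Finset.sum_ite_eq]
          simp [Function.comp]
      _ = ∑ z : V, (B ^ n) y z * B z x := by
          symm
          calc ∑ z : V, (B ^ n) y z * B z x
              = ∑ z : V, ∑ σ₂ : V → V, (if σ₂ x = z then (B ^ n) y z * μ σ₂ else 0) := by
                refine Finset.sum_congr rfl fun z _ => ?_
                rw [hB, Finset.mul_sum]
                exact Finset.sum_congr rfl fun σ₂ _ => by rw [mul_ite, mul_zero]
            _ = ∑ σ₂ : V → V, ∑ z : V, (if σ₂ x = z then (B ^ n) y z * μ σ₂ else 0) :=
                Finset.sum_comm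
            _ = ∑ σ₂ : V → V, (B ^ n) y (σ₂ x) * μ σ₂ := by
                refine Finset.sum_congr rfl fun σ₂ _ => ?_
                rw [Finset.sum_ite_eq]
                simp
            _ = ∑ σ₂ : V → V, ∑ σ₁ : V → V,
                  (if σ₁ (σ₂ x) = y then convPow μ n σ₁ * μ σ₂ else 0) := by
                refine Finset.sum_congr rfl fun σ₂ _ => ?_
                rw [← ih (σ₂ x) y, Finset.sum_mul]
                exact Finset.sum_congr rfl fun σ₁ _ => by rw [ite_mul, zero_mul]
            _ = ∑ σ₁ : V → V, ∑ σ₂ : V → V,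
                  (if σ₁ (σ₂ x) = y then convPow μ n σ₁ * μ σ₂ else 0) :=
                Finset.sum_comm

end AuxStmt7

/-- If the stochastic matrix `B(y,x) = μ({σ : σ x = y})` induced by `μ` has some
power with all entries positive, then there is a unique stationary probability
law `λ` (i.e., `μ * λ = λ`) and `μ^{*n}({σ : σ x = y}) → λ(y)` for all `x, y`. -/
theorem stmt_7 {V : Type*} [Fintype V] [DecidableEq V] [Nonempty V]
    (μ : (V → V) → ℝ) (hμ0 : ∀ σ : V → V, 0 ≤ μ σ) (hμ1 : ∑ σ : V → V, μ σ = 1)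
    (B : Matrix V V ℝ) (hB : ∀ y x, B y x = ∑ σ : V → V, if σ x = y then μ σ else 0)
    (r : ℕ) (hr : 0 < r) (hpos : ∀ y x, 0 < (B ^ r) y x) :
    ∃ lam : V → ℝ, (∀ x, 0 ≤ lam x) ∧ (∑ x, lam x = 1) ∧ (∀ y, convV μ lam y = lam y) ∧
      (∀ x y : V, Tendsto (fun n => ∑ σ : V → V, if σ x = y then convPow μ n σ else 0)
        atTop (nhds (lam y))) ∧
      (∀ lam' : V → ℝ, (∀ x, 0 ≤ lam' x) → (∑ x, lam' x = 1) →
        (∀ y, convV μ lam' y = lam' y) → lam' = lam) := by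
  classical
  -- Basic facts about B
  have hBnn : ∀ y x, 0 ≤ B y x := by
    intro y x
    rw [hB]
    exact Finset.sum_nonneg fun σ _ => by
      by_cases h : σ x = y <;> simp [h, hμ0 σ]
  have hBcs : ∀ x, ∑ y, B y x = 1 := by
    intro x
    simp only [hB]
    rw [Finset.sum_comm]
    simpa [Finset.sum_ite_eq] using hμ1
  -- δ and K
  set δ : ℝ := Finset.univ.inf' Finset.univ_nonempty (fun p : V × V => (B ^ r) p.1 p.2) with hδdef
  have hδpos : 0 < δ := Finset.lt_inf'_iff _ |>.2 fun p _ => hpos p.1 p.2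
  have hδle : ∀ y x, δ ≤ (B ^ r) y x := fun y x =>
    Finset.inf'_le _ (Finset.mem_univ ((y, x) : V × V))
  set K : ℝ := 1 - Fintype.card V * δ with hKdef
  have hK0 : 0 ≤ K := by
    have hx : (Fintype.card V : ℝ) * δ ≤ 1 := by
      obtain ⟨x⟩ := ‹Nonempty V›
      calc (Fintype.card V : ℝ) * δ = ∑ _y : V, δ := by
            simp [Finset.sum_const, nsmul_eq_mul]
        _ ≤ ∑ y, (B ^ r) y x := Finset.sum_le_sum fun y _ => hδle y x
        _ = 1 := stmt7_pow_colsum B hBcs r x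
    simp only [hKdef]; linarith
  have hK1 : K < 1 := by
    have hcard : (0 : ℝ) < Fintype.card V := by
      exact_mod_cast Fintype.card_pos
    have : 0 < (Fintype.card V : ℝ) * δ := mul_pos hcard hδpos
    simp only [hKdef]; linarith
  have hd := stmt7_key_decay B hBnn hBcs r hr δ hδle
  -- K^(n/r) → 0
  have hdiv : Tendsto (fun n : ℕ => n / r) atTop atTop := by
    refine tendsto_atTop_atTop.2 fun b => ⟨b * r, fun n hn => (Nat.le_div_iff_mul_le hr).2 hn⟩
  have hKto : Tendsto (fun n : ℕ => K ^ (n / r)) atTop (nhds 0) :=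
    (tendsto_pow_atTop_nhds_zero_of_lt_one hK0 hK1).comp hdiv
  have hKto2 : Tendsto (fun n : ℕ => 2 * K ^ (n / r)) atTop (nhds 0) := by
    have := hKto.const_mul (2 : ℝ)
    simpa using this
  -- basic vector facts
  have hesum : ∀ x : V, ∑ z, (Pi.single x 1 : V → ℝ) z = 1 := by
    intro x
    simp [Finset.sum_pi_single']
  have heabs : ∀ x : V, ∑ z, |(Pi.single x 1 : V → ℝ) z| ≤ 1 := by
    intro x
    have h : ∀ z, |(Pi.single x 1 : V → ℝ) z| = (Pi.single x 1 : V → ℝ) z := fun z =>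
      abs_of_nonneg (by by_cases h : z = x <;> simp [h, Pi.single_apply])
    rw [Finset.sum_congr rfl fun z _ => h z, hesum x]
  have hcoord : ∀ (n : ℕ) (x y : V), (B ^ n).mulVec (Pi.single x 1) y = (B ^ n) y x := by
    intro n x y
    rw [Matrix.mulVec_single]
    simp
  -- coordinate difference bound for two starting points
  have hbound1 : ∀ (n : ℕ) (x x' y : V), |(B ^ n) y x - (B ^ n) y x'| ≤ 2 * K ^ (n / r) := by
    intro n x x' y
    set v : V → ℝ := Pi.single x 1 - Pi.single x' 1 with hvdef
    have hvsum : ∑ z, v z = 0 := by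
      simp only [hvdef, Pi.sub_apply, Finset.sum_sub_distrib, hesum x, hesum x', sub_self]
    have hvabs : ∑ z, |v z| ≤ 2 := by
      calc ∑ z, |v z| ≤ ∑ z, (|(Pi.single x 1 : V → ℝ) z| + |(Pi.single x' 1 : V → ℝ) z|) :=
            Finset.sum_le_sum fun z _ => abs_sub _ _
        _ ≤ 2 := by
            rw [Finset.sum_add_distrib]
            linarith [heabs x, heabs x']
    have heq : (B ^ n).mulVec v y = (B ^ n) y x - (B ^ n) y x' := by
      rw [hvdef, Matrix.mulVec_sub]
      simp [hcoord]
    have h1 : |(B ^ n).mulVec v y| ≤ ∑ y', |(B ^ n).mulVec v y'| :=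
      Finset.single_le_sum (f := fun y' => |(B ^ n).mulVec v y'|)
        (fun y' _ => abs_nonneg _) (Finset.mem_univ y)
    have h2 := hd n v hvsum
    rw [heq] at h1
    calc |(B ^ n) y x - (B ^ n) y x'| ≤ K ^ (n / r) * ∑ z, |v z| := h1.trans h2
      _ ≤ K ^ (n / r) * 2 := by
          refine mul_le_mul_of_nonneg_left hvabs (pow_nonneg hK0 _)
      _ = 2 * K ^ (n / r) := by ring
  -- bound between times m and m + k
  have hbound2 : ∀ (m k : ℕ) (x y : V), |(B ^ (m + k)) y x - (B ^ m) y x| ≤ 2 * K ^ (m / r) := by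
    intro m k x y
    set w : V → ℝ := (B ^ k).mulVec (Pi.single x 1) - Pi.single x 1 with hwdef
    have hwsum : ∑ z, w z = 0 := by
      simp only [hwdef, Pi.sub_apply, Finset.sum_sub_distrib]
      rw [stmt7_colStoch_mulVec_sum _ (stmt7_pow_colsum B hBcs k)]
      exact sub_self _
    have hwabs : ∑ z, |w z| ≤ 2 := by
      calc ∑ z, |w z|
          ≤ ∑ z, (|(B ^ k).mulVec (Pi.single x 1) z| + |(Pi.single x 1 : V → ℝ) z|) :=
            Finset.sum_le_sum fun z _ => abs_sub _ _
        _ ≤ 2 := by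
            rw [Finset.sum_add_distrib]
            have h1 : ∑ z, |(B ^ k).mulVec (Pi.single x 1) z| = 1 := by
              have : ∀ z, |(B ^ k).mulVec (Pi.single x 1) z| = (B ^ k).mulVec (Pi.single x 1) z := by
                intro z
                rw [hcoord]
                exact abs_of_nonneg (stmt7_pow_nonneg B hBnn k z x)
              rw [Finset.sum_congr rfl fun z _ => this z,
                stmt7_colStoch_mulVec_sum _ (stmt7_pow_colsum B hBcs k), hesum x]
            linarith [heabs x]
    have heq : (B ^ m).mulVec w y = (B ^ (m + k)) y x - (B ^ m) y x := by
      rw [hwdef, Matrix.mulVec_sub, Matrix.mulVec_mulVec, ← pow_add]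
      simp [hcoord]
    have h1 : |(B ^ m).mulVec w y| ≤ ∑ y', |(B ^ m).mulVec w y'| :=
      Finset.single_le_sum (f := fun y' => |(B ^ m).mulVec w y'|)
        (fun y' _ => abs_nonneg _) (Finset.mem_univ y)
    have h2 := hd m w hwsum
    rw [heq] at h1
    calc |(B ^ (m + k)) y x - (B ^ m) y x| ≤ K ^ (m / r) * ∑ z, |w z| := h1.trans h2
      _ ≤ K ^ (m / r) * 2 := mul_le_mul_of_nonneg_left hwabs (pow_nonneg hK0 _)
      _ = 2 * K ^ (m / r) := by ring
  -- the reference point and Cauchy sequences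
  obtain ⟨x₀⟩ := ‹Nonempty V›
  have hcauchy : ∀ y : V, ∃ L, Tendsto (fun n => (B ^ n) y x₀) atTop (nhds L) := by
    intro y
    apply cauchySeq_tendsto_of_complete
    apply cauchySeq_of_le_tendsto_0 (fun N => 2 * K ^ (N / r) + 2 * K ^ (N / r))
    · intro n m N hn hm
      have h1 := hbound2 N (n - N) x₀ y
      rw [Nat.add_sub_cancel' hn] at h1
      have h2 := hbound2 N (m - N) x₀ y
      rw [Nat.add_sub_cancel' hm] at h2
      rw [Real.dist_eq]
      calc |(B ^ n) y x₀ - (B ^ m) y x₀|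
          ≤ |(B ^ n) y x₀ - (B ^ N) y x₀| + |(B ^ N) y x₀ - (B ^ m) y x₀| := by
            have := abs_sub_le ((B ^ n) y x₀) ((B ^ N) y x₀) ((B ^ m) y x₀)
            exact this
        _ ≤ 2 * K ^ (N / r) + 2 * K ^ (N / r) := by
            rw [abs_sub_comm ((B ^ N) y x₀)] 
            exact add_le_add h1 h2
    · have := hKto2.add hKto2
      simpa using this
  choose lam hlam using hcauchy
  -- convergence for every starting point
  have htend : ∀ x y : V, Tendsto (fun n => (B ^ n) y x) atTop (nhds (lam y)) := by
    intro x y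
    have hzero : Tendsto (fun n => (B ^ n) y x - (B ^ n) y x₀) atTop (nhds 0) := by
      refine squeeze_zero_norm (fun n => ?_) hKto2
      simpa [Real.norm_eq_abs] using hbound1 n x x₀ y
    have := hzero.add (hlam y)
    simpa using this
  -- properties of lam
  have hlam_nonneg : ∀ y, 0 ≤ lam y := by
    intro y
    exact ge_of_tendsto (htend x₀ y) (Eventually.of_forall fun n => stmt7_pow_nonneg B hBnn n y x₀)
  have hlam_sum : ∑ y, lam y = 1 := by
    have h1 : Tendsto (fun n => ∑ y, (B ^ n) y x₀) atTop (nhds (∑ y, lam y)) :=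
      tendsto_finset_sum _ fun y _ => htend x₀ y
    have h2 : (fun n => ∑ y, (B ^ n) y x₀) = fun _ => (1 : ℝ) := by
      funext n; exact stmt7_pow_colsum B hBcs n x₀
    rw [h2] at h1
    exact tendsto_nhds_unique h1 tendsto_const_nhds
  have hstat : ∀ y, B.mulVec lam y = lam y := by
    intro y
    have h1 : Tendsto (fun n => (B ^ (n + 1)) y x₀) atTop (nhds (lam y)) :=
      (htend x₀ y).comp (tendsto_add_atTop_nat 1)
    have h2 : Tendsto (fun n => (B ^ (n + 1)) y x₀) atTop (nhds (B.mulVec lam y)) := by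
      have heq : ∀ n, (B ^ (n + 1)) y x₀ = ∑ x, B y x * (B ^ n) x x₀ := by
        intro n
        rw [pow_succ', Matrix.mul_apply]
      have h3 : Tendsto (fun n => ∑ x, B y x * (B ^ n) x x₀) atTop
          (nhds (∑ x, B y x * lam x)) :=
        tendsto_finset_sum _ fun x _ => (htend x₀ x).const_mul (B y x)
      have h4 : B.mulVec lam y = ∑ x, B y x * lam x := by
        simp [Matrix.mulVec, dotProduct]
      rw [h4]
      simpa [heq] using h3
    exact tendsto_nhds_unique h2 h1
  refine ⟨lam, hlam_nonneg, hlam_sum, ?_, ?_, ?_⟩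
  · intro y
    rw [stmt7_convV_eq_mulVec μ B hB lam y]
    exact hstat y
  · intro x y
    simpa only [stmt7_convPow_eq_pow μ B hB] using htend x y
  · intro lam' hnn' hsum' hconv'
    have hstat' : B.mulVec lam' = lam' := by
      funext y
      rw [← stmt7_convV_eq_mulVec μ B hB lam' y]
      exact hconv' y
    have hpowstat' : ∀ n, (B ^ n).mulVec lam' = lam' := by
      intro n
      induction n with
      | zero => simp [Matrix.one_mulVec]
      | succ n ih =>
        rw [pow_succ', ← Matrix.mulVec_mulVec, ih, hstat']
    funext y
    have h1 : Tendsto (fun n => ∑ x, (B ^ n) y x * lam' x) atTop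
        (nhds (∑ x, lam y * lam' x)) :=
      tendsto_finset_sum _ fun x _ => (htend x y).mul_const (lam' x)
    have h2 : (fun n => ∑ x, (B ^ n) y x * lam' x) = fun _ => lam' y := by
      funext n
      have := congrFun (hpowstat' n) y
      rw [← this]
      simp [Matrix.mulVec, dotProduct]
    rw [h2] at h1
    have h3 : ∑ x, lam y * lam' x = lam y := by
      rw [← Finset.mul_sum, hsum', mul_one]
    rw [h3] at h1
    exact tendsto_nhds_unique tendsto_const_nhds h1
end
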